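/- Let f : M' → M be an injective ℤ-linear map of lattices in real inner product spaces that is norm-contractive (‖f(m)‖ ≤ ‖m‖ for all m ∈ M'_ℝ). If M can be generated by elements of norm at most c > 0, then χ(M) - χ(M') ≥ log V(rank M) - log V(rank M') - (rank M - rank M')·log c. -/

import Mathlib

open MeasureTheory Module

/-- The volume of the unit ball in the Euclidean space `ℝ^r`. -/
noncomputable def unitBallVol (r : ℕ) : ℝ :=
  (volume (Metric.ball (0 : EuclideanSpace ℝ (Fin r)) 1)).toReal

/-!
Extend the image under `f` of a `ℤ`-basis of `M'` by generators `u₁, …, uₙ` of `M` to an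
`ℝ`-basis of `E`. This family spans a sublattice of `M`, so `covol M` is at most its absolute
determinant. In a Gram–Schmidt basis adapted to the family the determinant is triangular: its first
`rank M'` diagonal entries multiply to the volume of the image under `f` of a fundamental
parallelepiped of `M'`, at most `covol M'` since `f` is contractive, and the remaining ones are
bounded by `‖uⱼ‖ ≤ c`. Hence `covol M ≤ c ^ (rank M - rank M') * covol M'`, whose logarithm is the
claim.
-/

open RealInnerProductSpace InnerProductSpace

theorem Fin.range_append {α : Type*} {m n : ℕ} (xs : Fin m → α) (ys : Fin n → α) :
    Set.range (Fin.append xs ys) = Set.range xs ∪ Set.range ys := by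
  rw [← (finSumFinEquiv.surjective.range_comp _), ← Set.Sum.elim_range, ← Fin.append_comp_sumElim]
  rfl

theorem LinearIndependent.exists_fin_append_of_span_eq_top {K V : Type*} [DivisionRing K]
    [AddCommGroup V] [Module K V] [FiniteDimensional K V] {m : ℕ} {w : Fin m → V}
    (hw : LinearIndependent K w) {s : Set V} (hs : Submodule.span K s = ⊤) :
    ∃ (n : ℕ) (u : Fin n → V), (∀ j, u j ∈ s) ∧ LinearIndependent K (Fin.append w u) ∧
      m + n = finrank K V := by
  obtain ⟨t, ht_sub, hw_sub, hs_sub, ht⟩ :=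
    exists_linearIndepOn_id_extension ((linearIndepOn_id_range_iff hw.injective).mpr hw)
      (Set.subset_union_left (t := s))
  have : Finite t := ht.finite
  let u : Fin (Nat.card ↑(t \ Set.range w)) → V := Subtype.val ∘ (Finite.equivFin _).symm
  have hu : ∀ j, u j ∈ t \ Set.range w := fun j => ((Finite.equivFin _).symm j).2
  have hrange : Set.range (Fin.append w u) = t := by
    rw [Fin.range_append, Set.range_comp, Equiv.range_eq_univ, Set.image_univ, Subtype.range_coe,
      Set.union_sdiff_cancel hw_sub]
  have hinj : Function.Injective (Fin.append w u) :=
    Fin.append_injective_iff.mpr ⟨hw.injective,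
      Subtype.val_injective.comp (Finite.equivFin _).symm.injective,
      fun i j h => (hu j).2 ⟨i, h⟩⟩
  have hli : LinearIndependent K (Fin.append w u) :=
    (linearIndepOn_id_range_iff hinj).mp (by rwa [hrange])
  have hspan : Submodule.span K (Set.range (Fin.append w u)) = ⊤ := by
    rw [hrange, eq_top_iff, ← hs]
    exact Submodule.span_le.mpr fun x hx => hs_sub (Or.inr hx)
  refine ⟨_, u, fun j => (ht_sub (hu j).1).resolve_left (hu j).2, hli, ?_⟩
  rw [← finrank_top K V, ← hspan, finrank_span_eq_card hli, Fintype.card_fin]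

theorem OrthonormalBasis.abs_det_eq_abs_det {ι E : Type*} [Fintype ι] [DecidableEq ι]
    [NormedAddCommGroup E] [InnerProductSpace ℝ E] (e b : OrthonormalBasis ι ℝ E) (v : ι → E) :
    |e.toBasis.det v| = |b.toBasis.det v| := by
  rw [e.toBasis.det.eq_smul_basis_det b.toBasis, AlternatingMap.smul_apply, smul_eq_mul, abs_mul,
    b.coe_toBasis, ← Real.norm_eq_abs (e.toBasis.det b), e.det_to_matrix_orthonormalBasis, one_mul]

theorem OrthonormalBasis.abs_det_le_prod_norm {F : Type*} [NormedAddCommGroup F]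
    [InnerProductSpace ℝ F] {n : ℕ} (e : OrthonormalBasis (Fin n) ℝ F) (v : Fin n → F) :
    |e.toBasis.det v| ≤ ∏ i, ‖v i‖ := by
  have : Fact (finrank ℝ F = n) := ⟨by simpa using finrank_eq_card_basis e.toBasis⟩
  rw [← e.toBasis.orientation.volumeForm_robust' e v]
  exact e.toBasis.orientation.abs_volumeForm_apply_le v

theorem OrthonormalBasis.abs_det_comp_le {E F : Type*} [NormedAddCommGroup E]
    [InnerProductSpace ℝ E] [NormedAddCommGroup F] [InnerProductSpace ℝ F] {n : ℕ}
    (e : OrthonormalBasis (Fin n) ℝ F) (e' : OrthonormalBasis (Fin n) ℝ E)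
    {g : E →ₗ[ℝ] F} (hg : ∀ x, ‖g x‖ ≤ ‖x‖) (v : Fin n → E) :
    |e.toBasis.det (g ∘ v)| ≤ |e'.toBasis.det v| := by
  have hdet : e.toBasis.det (g ∘ v) = e.toBasis.det (g ∘ e') * e'.toBasis.det v := by
    simpa [Function.comp_def] using
      congrArg (· v) (e.toBasis.det.compLinearMap g |>.eq_smul_basis_det e'.toBasis)
  have hge : |e.toBasis.det (g ∘ e')| ≤ 1 :=
    (e.abs_det_le_prod_norm _).trans <| Finset.prod_le_one (fun _ _ => norm_nonneg _)
      fun i _ => (hg (e' i)).trans_eq (e'.orthonormal.1 i)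
  rw [hdet, abs_mul]
  exact mul_le_of_le_one_left (abs_nonneg _) hge

noncomputable def innerCoords {ι E : Type*} [NormedAddCommGroup E] [InnerProductSpace ℝ E]
    (b : ι → E) : E →ₗ[ℝ] EuclideanSpace ℝ ι :=
  (WithLp.linearEquiv 2 ℝ (ι → ℝ)).symm.toLinearMap ∘ₗ LinearMap.pi fun i => innerₛₗ ℝ (b i)

theorem Orthonormal.norm_innerCoords_le {ι E : Type*} [Fintype ι] [NormedAddCommGroup E]
    [InnerProductSpace ℝ E] {b : ι → E} (hb : Orthonormal ℝ b) (x : E) :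
    ‖innerCoords b x‖ ≤ ‖x‖ := by
  rw [EuclideanSpace.norm_eq, Real.sqrt_le_left (norm_nonneg x)]
  simpa [innerCoords] using hb.sum_inner_products_le (x := x) (s := Finset.univ)

theorem OrthonormalBasis.abs_det_append_le {E' E : Type*}
    [NormedAddCommGroup E'] [InnerProductSpace ℝ E']
    [NormedAddCommGroup E] [InnerProductSpace ℝ E] [FiniteDimensional ℝ E] {m n : ℕ}
    (e : OrthonormalBasis (Fin (m + n)) ℝ E) (e' : OrthonormalBasis (Fin m) ℝ E')
    {f : E' →ₗ[ℝ] E} (hf : ∀ x, ‖f x‖ ≤ ‖x‖) (v' : Fin m → E') (u : Fin n → E) :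
    |e.toBasis.det (Fin.append (f ∘ v') u)| ≤ |e'.toBasis.det v'| * ∏ j, ‖u j‖ := by
  set v := Fin.append (f ∘ v') u
  let b := gramSchmidtOrthonormalBasis (by simpa using finrank_eq_card_basis e.toBasis) v
  let g : E' →ₗ[ℝ] EuclideanSpace ℝ (Fin m) := innerCoords (b ∘ Fin.castAdd n) ∘ₗ f
  have hg : ∀ x, ‖g x‖ ≤ ‖x‖ := fun x =>
    ((b.orthonormal.comp _ (Fin.castAdd_injective m n)).norm_innerCoords_le (f x)).trans (hf x)
  have hleft : ∏ i : Fin m, ⟪b (Fin.castAdd n i), v (Fin.castAdd n i)⟫ =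
      (EuclideanSpace.basisFun (Fin m) ℝ).toBasis.det (g ∘ v') := by
    rw [Basis.det_apply, Matrix.det_of_isUpperTriangular]
    · simp [g, v, innerCoords, Basis.toMatrix_apply]
    · intro i k hki
      simpa [g, v, innerCoords, Basis.toMatrix_apply] using
        gramSchmidtOrthonormalBasis_inv_triangular _ v (Fin.strictMono_castAdd n hki)
  have hright : |∏ j : Fin n, ⟪b (Fin.natAdd m j), v (Fin.natAdd m j)⟫| ≤ ∏ j, ‖u j‖ := by
    rw [Finset.abs_prod]
    refine Finset.prod_le_prod (fun _ _ => abs_nonneg _) fun j _ => ?_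
    simpa [v, b.orthonormal.1] using abs_real_inner_le_norm (b (Fin.natAdd m j)) (u j)
  rw [e.abs_det_eq_abs_det b, gramSchmidtOrthonormalBasis_det, Fin.prod_univ_add, abs_mul, hleft]
  exact mul_le_mul ((EuclideanSpace.basisFun (Fin m) ℝ).abs_det_comp_le e' hg v') hright
    (abs_nonneg _) (abs_nonneg _)

section Lattice

variable {E : Type*} [NormedAddCommGroup E] [InnerProductSpace ℝ E] [FiniteDimensional ℝ E]
  [MeasurableSpace E] [BorelSpace E]

theorem toReal_volume_ball_zero_one :
    (volume (Metric.ball (0 : E) 1)).toReal = unitBallVol (finrank ℝ E) := by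
  let b := stdOrthonormalBasis ℝ E
  have hball : b.repr ⁻¹' Metric.ball 0 1 = Metric.ball (0 : E) 1 := by
    ext x
    simp
  rw [unitBallVol, ← b.measurePreserving_repr.measure_preimage measurableSet_ball.nullMeasurableSet,
    hball]

theorem toReal_volume_ball_zero_one_pos : 0 < (volume (Metric.ball (0 : E) 1)).toReal :=
  ENNReal.toReal_pos (Metric.measure_ball_pos volume 0 one_pos).ne' measure_ball_lt_top.ne

theorem ZLattice.covolume_le_of_le {L₁ L₂ : Submodule ℤ E} [DiscreteTopology L₁] [IsZLattice ℝ L₁]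
    [DiscreteTopology L₂] [IsZLattice ℝ L₂] (h : L₁ ≤ L₂) :
    covolume L₂ ≤ covolume L₁ := by
  have hdiv := covolume_div_covolume_eq_relIndex' L₁ L₂ h
  have hpos : 0 < covolume L₁ / covolume L₂ := div_pos (covolume_pos L₁) (covolume_pos L₂)
  have hindex : (1 : ℝ) ≤ L₁.toAddSubgroup.relIndex L₂.toAddSubgroup := by
    rw [hdiv] at hpos
    exact_mod_cast Nat.one_le_iff_ne_zero.mpr (by exact_mod_cast hpos.ne')
  rwa [← hdiv, one_le_div (covolume_pos L₂ volume)] at hindex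

theorem ZLattice.covolume_eq_abs_det {ι : Type*} [Fintype ι] [DecidableEq ι]
    (L : Submodule ℤ E) [DiscreteTopology L] [IsZLattice ℝ L]
    (b : Basis ι ℤ L) (e : OrthonormalBasis ι ℝ E) :
    covolume L = |e.toBasis.det ((↑) ∘ b)| := by
  rw [covolume_eq_det_mul_measureReal L volume b e.toBasis,
    measureReal_congr (ZSpan.fundamentalDomain_ae_parallelepiped e.toBasis volume),
    e.coe_toBasis, measureReal_def, e.volume_parallelepiped, ENNReal.toReal_one, mul_one]

theorem ZLattice.covolume_le_abs_det {ι : Type*} [Fintype ι] [DecidableEq ι]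
    (L : Submodule ℤ E) [DiscreteTopology L] [IsZLattice ℝ L]
    (e : OrthonormalBasis ι ℝ E) (b : Basis ι ℝ E) (hb : ∀ i, b i ∈ L) :
    covolume L ≤ |e.toBasis.det b| := by
  have hle : Submodule.span ℤ (Set.range b) ≤ L :=
    Submodule.span_le.mpr (Set.range_subset_iff.mpr hb)
  refine (covolume_le_of_le hle).trans_eq ?_
  rw [covolume_eq_abs_det _ (b.restrictScalars ℤ) e]
  congr 3
  ext i
  simp

end Lattice

theorem ZLattice.covolume_le_pow_mul_covolume_of_contraction {E' E : Type*}
    [NormedAddCommGroup E'] [InnerProductSpace ℝ E'] [FiniteDimensional ℝ E']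
    [MeasurableSpace E'] [BorelSpace E']
    [NormedAddCommGroup E] [InnerProductSpace ℝ E] [FiniteDimensional ℝ E]
    [MeasurableSpace E] [BorelSpace E]
    (M' : Submodule ℤ E') [DiscreteTopology M'] [IsZLattice ℝ M']
    (M : Submodule ℤ E) [DiscreteTopology M] [IsZLattice ℝ M]
    {f : E' →ₗ[ℝ] E} (hinj : Function.Injective f)
    (hmap : M'.map (f.restrictScalars ℤ) ≤ M) (hcontr : ∀ x, ‖f x‖ ≤ ‖x‖)
    {s : Set E} (hs_span : Submodule.span ℤ s = M) {c : ℝ} (hs : ∀ x ∈ s, ‖x‖ ≤ c) :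
    covolume M ≤ c ^ (finrank ℤ M - finrank ℤ M') * covolume M' := by
  let b' := Module.finBasis ℤ M'
  let v' := b'.ofZLatticeBasis ℝ M'
  have hw : LinearIndependent ℝ (f ∘ v') :=
    v'.linearIndependent.map' f (LinearMap.ker_eq_bot.mpr hinj)
  have hs_top : Submodule.span ℝ s = ⊤ := by
    rw [← Submodule.span_span_of_tower ℤ, hs_span, IsZLattice.span_top]
  obtain ⟨n, u, hu, hli, hcard⟩ := hw.exists_fin_append_of_span_eq_top hs_top
  have hn : n = finrank ℤ M - finrank ℤ M' := by
    rw [ZLattice.rank ℝ M, ← hcard]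
    omega
  let e := (stdOrthonormalBasis ℝ E).reindex (finCongr hcard.symm)
  let e' := (stdOrthonormalBasis ℝ E').reindex (finCongr (ZLattice.rank ℝ M').symm)
  let bv := basisOfLinearIndependentOfCardEqFinrank' _ hli (by simpa using hcard)
  have hbv : ∀ i, bv i ∈ M := by
    refine Fin.addCases (fun i => ?_) (fun j => ?_)
    · simpa [bv, v'] using hmap ⟨b' i, (b' i).2, rfl⟩
    · simpa [bv] using hs_span ▸ Submodule.subset_span (hu j)
  have hv' : (↑) ∘ b' = v' := funext fun i => (b'.ofZLatticeBasis_apply ℝ M' i).symm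
  calc covolume M ≤ |e.toBasis.det (Fin.append (f ∘ v') u)| := by
        simpa [bv] using covolume_le_abs_det M e bv hbv
    _ ≤ |e'.toBasis.det v'| * ∏ j, ‖u j‖ := e.abs_det_append_le e' hcontr v' u
    _ ≤ covolume M' * c ^ n := by
        rw [covolume_eq_abs_det M' b' e', hv']
        refine mul_le_mul_of_nonneg_left ?_ (abs_nonneg _)
        exact (Finset.prod_le_prod (fun _ _ => norm_nonneg _) fun j _ => hs _ (hu j)).trans_eq
          (Fin.prod_const n c)
    _ = c ^ (finrank ℤ M - finrank ℤ M') * covolume M' := by rw [hn, mul_comm]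

theorem chi_sub_chi_ge_of_norm_contractive_general
    {E' E : Type*}
    [NormedAddCommGroup E'] [InnerProductSpace ℝ E'] [FiniteDimensional ℝ E']
    [MeasurableSpace E'] [BorelSpace E']
    [NormedAddCommGroup E] [InnerProductSpace ℝ E] [FiniteDimensional ℝ E]
    [MeasurableSpace E] [BorelSpace E]
    (M' : Submodule ℤ E') [DiscreteTopology M'] [IsZLattice ℝ M']
    (M : Submodule ℤ E) [DiscreteTopology M] [IsZLattice ℝ M]
    (f : E' →ₗ[ℝ] E) (hinj : Function.Injective f)
    (hmap : M'.map (f.restrictScalars ℤ) ≤ M)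
    (hcontr : ∀ x : E', ‖f x‖ ≤ ‖x‖)
    (c : ℝ)
    (hgen : ∃ s : Set E, Submodule.span ℤ s = M ∧ ∀ x ∈ s, ‖x‖ ≤ c) :
    Real.log ((volume (Metric.ball (0 : E) 1)).toReal / ZLattice.covolume M)
      - Real.log ((volume (Metric.ball (0 : E') 1)).toReal / ZLattice.covolume M')
    ≥ Real.log (unitBallVol (finrank ℤ M)) - Real.log (unitBallVol (finrank ℤ M'))
      - ((finrank ℤ M : ℝ) - (finrank ℤ M' : ℝ)) * Real.log c := by
  obtain ⟨s, hs_span, hs⟩ := hgen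
  have hcov := ZLattice.covolume_le_pow_mul_covolume_of_contraction M' M hinj hmap hcontr hs_span hs
  have hM := ZLattice.covolume_pos M volume
  have hM' := ZLattice.covolume_pos M' volume
  have hrank : finrank ℤ M' ≤ finrank ℤ M := by
    rw [ZLattice.rank ℝ M, ZLattice.rank ℝ M']
    exact LinearMap.finrank_le_finrank_of_injective hinj
  have hlog : Real.log (ZLattice.covolume M) ≤
      ((finrank ℤ M : ℝ) - finrank ℤ M') * Real.log c + Real.log (ZLattice.covolume M') := by
    have hpow := pos_of_mul_pos_left (hM.trans_le hcov) hM'.le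
    rw [← Nat.cast_sub hrank, ← Real.log_pow, ← Real.log_mul hpow.ne' hM'.ne']
    exact Real.log_le_log hM hcov
  rw [ZLattice.rank ℝ M, ZLattice.rank ℝ M'] at hlog ⊢
  rw [← toReal_volume_ball_zero_one, ← toReal_volume_ball_zero_one,
    Real.log_div toReal_volume_ball_zero_one_pos.ne' hM.ne',
    Real.log_div toReal_volume_ball_zero_one_pos.ne' hM'.ne']
  linarith

/-- If `f : M' → M` is an injective norm-contractive `ℤ`-linear map of lattices and `M` is
generated by elements of norm at most `c > 0`, then
`χ(M) - χ(M') ≥ log V(rank M) - log V(rank M') - (rank M - rank M')·log c`. -/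
theorem chi_sub_chi_ge_of_norm_contractive
    {E' E : Type*}
    [NormedAddCommGroup E'] [InnerProductSpace ℝ E'] [FiniteDimensional ℝ E']
    [MeasurableSpace E'] [BorelSpace E']
    [NormedAddCommGroup E] [InnerProductSpace ℝ E] [FiniteDimensional ℝ E]
    [MeasurableSpace E] [BorelSpace E]
    (M' : Submodule ℤ E') [DiscreteTopology M'] [IsZLattice ℝ M']
    (M : Submodule ℤ E) [DiscreteTopology M] [IsZLattice ℝ M]
    (f : E' →ₗ[ℝ] E) (hinj : Function.Injective f)
    (hmap : M'.map (f.restrictScalars ℤ) ≤ M)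
    (hcontr : ∀ x : E', ‖f x‖ ≤ ‖x‖)
    (c : ℝ) (hc : 0 < c)
    (hgen : ∃ s : Set E, Submodule.span ℤ s = M ∧ ∀ x ∈ s, ‖x‖ ≤ c) :
    Real.log ((volume (Metric.ball (0 : E) 1)).toReal / ZLattice.covolume M)
      - Real.log ((volume (Metric.ball (0 : E') 1)).toReal / ZLattice.covolume M')
    ≥ Real.log (unitBallVol (finrank ℤ M)) - Real.log (unitBallVol (finrank ℤ M'))
      - ((finrank ℤ M : ℝ) - (finrank ℤ M' : ℝ)) * Real.log c :=
  chi_sub_chi_ge_of_norm_contractive_general M' M f hinj hmap hcontr c hgen
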